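/- If every server in a majority W ⊆ S of a finite set S holds a tag ≥ t (lexicographic order on ℕ × I), and a writer computes maxTag as the maximum tag over a majority D ⊆ S, then the writer's new tag ⟨(maxTag).1 + 1, w⟩ is strictly greater than t. -/

import Mathlib

namespace Finset

theorem inter_nonempty_of_majorities {α : Type*} [DecidableEq α] {S W D : Finset α}
    (hW : W ⊆ S) (hD : D ⊆ S) (hWmaj : S.card < 2 * W.card) (hDmaj : S.card < 2 * D.card) :
    (W ∩ D).Nonempty :=
  inter_nonempty_of_card_lt_card_add_card hW hD (by omega)

theorem le_sup'_of_majorities {α β : Type*} [SemilatticeSup β] {S W D : Finset α}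
    (hW : W ⊆ S) (hD : D ⊆ S) (hWmaj : S.card < 2 * W.card) (hDmaj : S.card < 2 * D.card)
    (hDne : D.Nonempty) {f : α → β} {b : β} (hf : ∀ s ∈ W, b ≤ f s) :
    b ≤ D.sup' hDne f := by
  classical
  obtain ⟨s, hs⟩ := inter_nonempty_of_majorities hW hD hWmaj hDmaj
  rw [mem_inter] at hs
  exact (hf s hs.1).trans (le_sup' f hs.2)

end Finset

theorem Prod.Lex.lt_toLex_succ_fst_of_le {β : Type*} [Preorder β] {t u : ℕ ×ₗ β} (h : t ≤ u)
    (b : β) : t < toLex ((ofLex u).1 + 1, b) :=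
  Prod.Lex.lt_iff.mpr (Or.inl (Nat.lt_succ_of_le (Prod.Lex.monotone_fst t u h)))

theorem write_tag_exceeds_general {α : Type*} {I : Type*} [LinearOrder I]
    (S W D : Finset α) (tag : α → ℕ ×ₗ I) (t : ℕ ×ₗ I) (w : I)
    (hW : W ⊆ S) (hD : D ⊆ S)
    (hWmaj : 2 * W.card > S.card) (hDmaj : 2 * D.card > S.card)
    (hDne : D.Nonempty)
    (htag : ∀ s ∈ W, t ≤ tag s) :
    t < toLex ((ofLex (D.sup' hDne tag)).1 + 1, w) :=
  Prod.Lex.lt_toLex_succ_fst_of_le (Finset.le_sup'_of_majorities hW hD hWmaj hDmaj hDne htag) w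

theorem write_tag_exceeds {α : Type*} {I : Type*} [DecidableEq α] [LinearOrder I]
    (S W D : Finset α) (tag : α → ℕ ×ₗ I) (t : ℕ ×ₗ I) (w : I)
    (hW : W ⊆ S) (hD : D ⊆ S)
    (hWmaj : 2 * W.card > S.card) (hDmaj : 2 * D.card > S.card)
    (hDne : D.Nonempty)
    (htag : ∀ s ∈ W, t ≤ tag s) :
    t < toLex ((ofLex (D.sup' hDne tag)).1 + 1, w) :=
  write_tag_exceeds_general S W D tag t w hW hD hWmaj hDmaj hDne htag
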